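/- Let δ > 0, 0 < σ < 1/2, W > 0 and ψ ∈ ℝ. For λ large enough that δ²λ^{2σ} < λ, set a_λ := δλ^σ, b_λ := (λ − δ²λ^{2σ})^{1/2}, τ_λ := W/a_λ, u_λ(τ_λ) := (1/b_λ)∫₀^{τ_λ} e^{−a_λ(τ_λ−s)} sin(b_λ(τ_λ−s)) sin(b_λ(τ_λ−s)+ψ) ds, and u_λ'(τ_λ) := −a_λ u_λ(τ_λ) + ∫₀^{τ_λ} e^{−a_λ(τ_λ−s)} cos(b_λ(τ_λ−s)) sin(b_λ(τ_λ−s)+ψ) ds. Then lim_{λ→+∞} λ^{σ+1/2} u_λ(τ_λ) = (1/(2δ))(1 − e^{−W}) cos ψ and lim_{λ→+∞} λ^σ u_λ'(τ_λ) = (1/(2δ))(1 − e^{−W}) sin ψ. -/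

import Mathlib

open Filter

/-- `a_λ := δλ^σ`. -/
noncomputable def al (δ σ lam : ℝ) : ℝ := δ * lam ^ σ

/-- `b_λ := (λ − δ²λ^{2σ})^{1/2}`. -/
noncomputable def bl (δ σ lam : ℝ) : ℝ := (lam - δ ^ 2 * lam ^ (2 * σ)) ^ ((1 : ℝ) / 2)

/-- `τ_λ := W/a_λ`. -/
noncomputable def tl (δ σ W lam : ℝ) : ℝ := W / al δ σ lam

/-- `u_λ(τ_λ)` for the forcing term `f_λ(t) := sin(b_λ(τ_λ − t) + ψ)`. -/
noncomputable def uTau (δ σ W ψ lam : ℝ) : ℝ :=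
  (1 / bl δ σ lam) * ∫ s in (0 : ℝ)..(tl δ σ W lam),
    Real.exp (-(al δ σ lam) * (tl δ σ W lam - s)) *
      Real.sin (bl δ σ lam * (tl δ σ W lam - s)) *
      Real.sin (bl δ σ lam * (tl δ σ W lam - s) + ψ)

/-- `u_λ'(τ_λ)` for the forcing term `f_λ(t) := sin(b_λ(τ_λ − t) + ψ)`. -/
noncomputable def uTau' (δ σ W ψ lam : ℝ) : ℝ :=
  -(al δ σ lam) * uTau δ σ W ψ lam + ∫ s in (0 : ℝ)..(tl δ σ W lam),
    Real.exp (-(al δ σ lam) * (tl δ σ W lam - s)) *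
      Real.cos (bl δ σ lam * (tl δ σ W lam - s)) *
      Real.sin (bl δ σ lam * (tl δ σ W lam - s) + ψ)

/-! Substituting `r = τ - s` and expanding the products of sines by product-to-sum formulas,
`u_λ(τ_λ)` and the integral in `u_λ'(τ_λ)` become `cos ψ (1 - e^{-W}) / (2a)`, resp.
`sin ψ (1 - e^{-W}) / (2a)`, plus half of a damped oscillatory integral
`∫₀^τ e^{-ar} cos(2br + φ) dr`, which an explicit primitive bounds by `O(1/b)`.
Since `a = δλ^σ`, `b ~ λ^{1/2}` and `σ < 1/2`, after rescaling the main terms converge while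
the oscillatory ones are `O(λ^{σ - 1/2})`. -/

open Real Filter Topology intervalIntegral

-- Since `sin x = cos (x - π / 2)`, this one integral serves for both `u` and `u'`.
noncomputable def dampedCos (a c ψ τ : ℝ) : ℝ :=
  ∫ r in (0 : ℝ)..τ, exp (-a * r) * cos (c * r + ψ)

lemma hasDerivAt_exp_neg_mul (a r : ℝ) :
    HasDerivAt (fun r => exp (-a * r)) (exp (-a * r) * -a) r := by
  simpa using ((hasDerivAt_id r).const_mul (-a)).exp

lemma integral_exp_neg_mul {a : ℝ} (ha : a ≠ 0) (τ : ℝ) :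
    ∫ r in (0 : ℝ)..τ, exp (-a * r) = (1 - exp (-a * τ)) / a := by
  have hderiv (r : ℝ) : HasDerivAt (fun r => -exp (-a * r) / a) (exp (-a * r)) r := by
    refine ((hasDerivAt_exp_neg_mul a r).neg.div_const a).congr_deriv ?_
    field_simp
  rw [integral_eq_sub_of_hasDerivAt (fun r _ => hderiv r)
    (Continuous.intervalIntegrable (by fun_prop) _ _)]
  simp only [mul_zero, exp_zero]
  ring

lemma hasDerivAt_dampedCos_primitive {a c : ℝ} (h : a ^ 2 + c ^ 2 ≠ 0) (ψ r : ℝ) :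
    HasDerivAt
      (fun r => exp (-a * r) * (c * sin (c * r + ψ) - a * cos (c * r + ψ)) / (a ^ 2 + c ^ 2))
      (exp (-a * r) * cos (c * r + ψ)) r := by
  have hlin : HasDerivAt (fun r => c * r + ψ) c r := by
    simpa using ((hasDerivAt_id r).const_mul c).add_const ψ
  refine (((hasDerivAt_exp_neg_mul a r).mul
    ((hlin.sin.const_mul c).sub (hlin.cos.const_mul a))).div_const
    (a ^ 2 + c ^ 2)).congr_deriv ?_
  simp only [Pi.sub_apply]
  field_simp
  ring

lemma dampedCos_eq {a c : ℝ} (h : a ^ 2 + c ^ 2 ≠ 0) (ψ τ : ℝ) :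
    dampedCos a c ψ τ = (exp (-a * τ) * (c * sin (c * τ + ψ) - a * cos (c * τ + ψ))
      - (c * sin ψ - a * cos ψ)) / (a ^ 2 + c ^ 2) := by
  rw [dampedCos, integral_eq_sub_of_hasDerivAt (fun r _ => hasDerivAt_dampedCos_primitive h ψ r)
    (Continuous.intervalIntegrable (by fun_prop) _ _)]
  simp only [mul_zero, zero_add, exp_zero, one_mul]
  ring

lemma abs_mul_sin_sub_mul_cos_le_div (a c x : ℝ) (hc : c ≠ 0) :
    |c * sin x - a * cos x| / (a ^ 2 + c ^ 2) ≤ 2 / |c| := by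
  have hc' : 0 < |c| := abs_pos.mpr hc
  have hpos : 0 < a ^ 2 + c ^ 2 := by positivity
  rw [div_le_div_iff₀ hpos hc']
  have htrig : |c * sin x - a * cos x| ≤ |c| + |a| := by
    refine (abs_sub _ _).trans (add_le_add ?_ ?_) <;> rw [abs_mul]
    · exact mul_le_of_le_one_right (abs_nonneg c) (abs_sin_le_one x)
    · exact mul_le_of_le_one_right (abs_nonneg a) (abs_cos_le_one x)
  have hsq : |a| * |c| ≤ a ^ 2 + c ^ 2 := by
    nlinarith [sq_abs a, sq_abs c, sq_nonneg (|a| - |c|)]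
  nlinarith [sq_abs c]

lemma abs_dampedCos_le (a : ℝ) {c : ℝ} (hc : c ≠ 0) (ψ τ : ℝ) :
    |dampedCos a c ψ τ| ≤ 2 * (1 + exp (-a * τ)) / |c| := by
  have hpos : 0 < a ^ 2 + c ^ 2 := by positivity
  rw [dampedCos_eq hpos.ne', sub_div, mul_div_assoc]
  calc _ ≤ |exp (-a * τ) * ((c * sin (c * τ + ψ) - a * cos (c * τ + ψ)) / (a ^ 2 + c ^ 2))|
        + |(c * sin ψ - a * cos ψ) / (a ^ 2 + c ^ 2)| := abs_sub _ _
    _ ≤ exp (-a * τ) * (2 / |c|) + 2 / |c| := by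
      rw [abs_mul, abs_exp, abs_div, abs_div, abs_of_pos hpos]
      exact add_le_add (mul_le_mul_of_nonneg_left (abs_mul_sin_sub_mul_cos_le_div a c _ hc)
        (exp_pos _).le) (abs_mul_sin_sub_mul_cos_le_div a c _ hc)
    _ = 2 * (1 + exp (-a * τ)) / |c| := by ring

lemma sin_mul_sin_add (x ψ : ℝ) : sin x * sin (x + ψ) = (cos ψ - cos (2 * x + ψ)) / 2 := by
  have hsub : cos (x + ψ - x) = cos (x + ψ) * cos x + sin (x + ψ) * sin x := cos_sub _ _
  rw [add_sub_cancel_left] at hsub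
  rw [show 2 * x + ψ = x + ψ + x by ring, cos_add (x + ψ) x, hsub]
  ring

lemma cos_mul_sin_add (x ψ : ℝ) :
    cos x * sin (x + ψ) = (sin ψ + cos (2 * x + (ψ - π / 2))) / 2 := by
  have hsub : sin (x + ψ - x) = sin (x + ψ) * cos x - cos (x + ψ) * sin x := sin_sub _ _
  rw [add_sub_cancel_left] at hsub
  rw [show 2 * x + (ψ - π / 2) = x + ψ + x - π / 2 by ring, cos_sub_pi_div_two,
    sin_add (x + ψ) x, hsub]
  ring

lemma integral_exp_mul_sin_mul_sin_add {a : ℝ} (ha : a ≠ 0) (b ψ τ : ℝ) :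
    ∫ s in (0 : ℝ)..τ, exp (-a * (τ - s)) * sin (b * (τ - s)) * sin (b * (τ - s) + ψ)
      = cos ψ * (1 - exp (-a * τ)) / (2 * a) - dampedCos a (2 * b) ψ τ / 2 := by
  have hflip := integral_comp_sub_left
    (fun r => exp (-a * r) * sin (b * r) * sin (b * r + ψ)) (a := 0) (b := τ) τ
  simp only [sub_self, sub_zero] at hflip
  have hsplit (r : ℝ) : exp (-a * r) * sin (b * r) * sin (b * r + ψ)
      = cos ψ / 2 * exp (-a * r) - exp (-a * r) * cos (2 * b * r + ψ) / 2 := by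
    rw [mul_assoc, sin_mul_sin_add, ← mul_assoc]; ring
  rw [hflip, integral_congr fun r _ => hsplit r, integral_sub, integral_const_mul, integral_div,
    integral_exp_neg_mul ha, dampedCos]
  · ring
  all_goals exact Continuous.intervalIntegrable (by fun_prop) _ _

lemma integral_exp_mul_cos_mul_sin_add {a : ℝ} (ha : a ≠ 0) (b ψ τ : ℝ) :
    ∫ s in (0 : ℝ)..τ, exp (-a * (τ - s)) * cos (b * (τ - s)) * sin (b * (τ - s) + ψ)
      = sin ψ * (1 - exp (-a * τ)) / (2 * a) + dampedCos a (2 * b) (ψ - π / 2) τ / 2 := by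
  have hflip := integral_comp_sub_left
    (fun r => exp (-a * r) * cos (b * r) * sin (b * r + ψ)) (a := 0) (b := τ) τ
  simp only [sub_self, sub_zero] at hflip
  have hsplit (r : ℝ) : exp (-a * r) * cos (b * r) * sin (b * r + ψ)
      = sin ψ / 2 * exp (-a * r) + exp (-a * r) * cos (2 * b * r + (ψ - π / 2)) / 2 := by
    rw [mul_assoc, cos_mul_sin_add, ← mul_assoc]; ring
  rw [hflip, integral_congr fun r _ => hsplit r, integral_add, integral_const_mul, integral_div,
    integral_exp_neg_mul ha, dampedCos]
  · ring
  all_goals exact Continuous.intervalIntegrable (by fun_prop) _ _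

lemma tendsto_rpow_atTop_of_neg {y : ℝ} (hy : y < 0) :
    Tendsto (fun x : ℝ => x ^ y) atTop (𝓝 0) := by
  simpa using tendsto_rpow_neg_atTop (neg_pos.mpr hy)

section Asymptotics

variable {δ σ lam : ℝ}

lemma al_ne_zero (hδ : δ ≠ 0) (hlam : 0 < lam) : al δ σ lam ≠ 0 :=
  mul_ne_zero hδ (rpow_pos_of_pos hlam σ).ne'

lemma al_mul_tl (hδ : δ ≠ 0) (hlam : 0 < lam) (W : ℝ) : al δ σ lam * tl δ σ W lam = W :=
  mul_div_cancel₀ W (al_ne_zero hδ hlam)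

lemma bl_eq (hlam : 0 < lam) (h : δ ^ 2 * lam ^ (2 * σ - 1) ≤ 1) :
    bl δ σ lam = lam ^ (1 / 2 : ℝ) * (1 - δ ^ 2 * lam ^ (2 * σ - 1)) ^ (1 / 2 : ℝ) := by
  have hpow : lam * lam ^ (2 * σ - 1) = lam ^ (2 * σ) := by
    rw [mul_comm, ← rpow_add_one hlam.ne']
    ring_nf
  rw [bl, ← mul_rpow hlam.le (sub_nonneg.mpr h), mul_sub, mul_one, mul_left_comm, hpow]

lemma bl_pos (hlam : 0 < lam) (h : δ ^ 2 * lam ^ (2 * σ - 1) < 1) : 0 < bl δ σ lam := by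
  rw [bl_eq hlam h.le]
  exact mul_pos (rpow_pos_of_pos hlam _) (rpow_pos_of_pos (sub_pos.mpr h) _)

lemma eventually_subcritical (hσ : σ < 1 / 2) :
    ∀ᶠ lam : ℝ in atTop, 0 < lam ∧ δ ^ 2 * lam ^ (2 * σ - 1) < 1 := by
  have h := (tendsto_rpow_atTop_of_neg (by linarith : 2 * σ - 1 < 0)).const_mul (δ ^ 2)
  rw [mul_zero] at h
  exact (eventually_gt_atTop 0).and (h.eventually_lt_const one_pos)

lemma tendsto_rpow_half_div_bl (hσ : σ < 1 / 2) :
    Tendsto (fun lam : ℝ => lam ^ (1 / 2 : ℝ) / bl δ σ lam) atTop (𝓝 1) := by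
  have hsmall := (tendsto_rpow_atTop_of_neg (by linarith : 2 * σ - 1 < 0)).const_mul (δ ^ 2)
  have hlim := ((tendsto_const_nhds (x := (1 : ℝ))).sub hsmall).rpow_const
    (p := 1 / 2) (Or.inr (by norm_num)) |>.inv₀ (by norm_num)
  rw [mul_zero, sub_zero, one_rpow, inv_one] at hlim
  refine hlim.congr' ?_
  filter_upwards [eventually_subcritical (δ := δ) hσ] with lam ⟨hlam, h⟩
  rw [bl_eq hlam h.le, div_mul_cancel_left₀ (rpow_pos_of_pos hlam _).ne']

lemma isBoundedUnder_bl_mul_dampedCos (hδ : δ ≠ 0) (hσ : σ < 1 / 2) (W φ : ℝ) :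
    IsBoundedUnder (· ≤ ·) atTop
      (norm ∘ fun lam =>
        bl δ σ lam * dampedCos (al δ σ lam) (2 * bl δ σ lam) φ (tl δ σ W lam)) := by
  refine isBoundedUnder_of_eventually_le (a := 1 + exp (-W)) ?_
  filter_upwards [eventually_subcritical (δ := δ) hσ] with lam ⟨hlam, h⟩
  have hb := bl_pos hlam h
  have hD := abs_dampedCos_le (al δ σ lam) (mul_pos two_pos hb).ne' φ (tl δ σ W lam)
  rw [neg_mul, al_mul_tl hδ hlam, abs_of_pos (mul_pos two_pos hb)] at hD
  calc ‖bl δ σ lam * dampedCos _ _ φ _‖ = bl δ σ lam * |dampedCos _ _ φ _| := by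
        rw [norm_mul, norm_of_nonneg hb.le, norm_eq_abs]
    _ ≤ bl δ σ lam * (2 * (1 + exp (-W)) / (2 * bl δ σ lam)) := by gcongr
    _ = 1 + exp (-W) := by field_simp

lemma uTau_eq (hδ : δ ≠ 0) (hlam : 0 < lam) (W ψ : ℝ) :
    uTau δ σ W ψ lam = (cos ψ * (1 - exp (-W)) / (2 * al δ σ lam)
      - dampedCos (al δ σ lam) (2 * bl δ σ lam) ψ (tl δ σ W lam) / 2) / bl δ σ lam := by
  rw [uTau, integral_exp_mul_sin_mul_sin_add (al_ne_zero hδ hlam), neg_mul, al_mul_tl hδ hlam,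
    one_div_mul_eq_div]

lemma uTau'_eq (hδ : δ ≠ 0) (hlam : 0 < lam) (W ψ : ℝ) :
    uTau' δ σ W ψ lam = -al δ σ lam * uTau δ σ W ψ lam
      + (sin ψ * (1 - exp (-W)) / (2 * al δ σ lam)
      + dampedCos (al δ σ lam) (2 * bl δ σ lam) (ψ - π / 2) (tl δ σ W lam) / 2) := by
  have hW : -al δ σ lam * tl δ σ W lam = -W := by rw [neg_mul, al_mul_tl hδ hlam]
  rw [uTau', integral_exp_mul_cos_mul_sin_add (al_ne_zero hδ hlam), hW]

lemma rpow_add_half_mul_uTau_eq (hδ : δ ≠ 0) (hlam : 0 < lam) (W ψ : ℝ) :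
    lam ^ (σ + 1 / 2 : ℝ) * uTau δ σ W ψ lam
      = lam ^ (1 / 2 : ℝ) / bl δ σ lam * (1 / (2 * δ) * (1 - exp (-W)) * cos ψ)
        - lam ^ (σ - 1 / 2) * (lam ^ (1 / 2 : ℝ) / bl δ σ lam) ^ 2
          * (bl δ σ lam * dampedCos (al δ σ lam) (2 * bl δ σ lam) ψ (tl δ σ W lam))
          / 2 := by
  have hε := (rpow_pos_of_pos hlam (σ - 1 / 2)).ne'
  have hs := (rpow_pos_of_pos hlam (1 / 2)).ne'
  have hpow : lam ^ σ = lam ^ (σ - 1 / 2) * lam ^ (1 / 2 : ℝ) := by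
    rw [← rpow_add hlam, sub_add_cancel]
  rw [uTau_eq hδ hlam, al, rpow_add hlam, hpow]
  field_simp

lemma rpow_mul_uTau'_eq (hδ : δ ≠ 0) (hlam : 0 < lam) (hb : bl δ σ lam ≠ 0) (W ψ : ℝ) :
    lam ^ σ * uTau' δ σ W ψ lam
      = -δ * lam ^ (σ - 1 / 2) * (lam ^ (σ + 1 / 2 : ℝ) * uTau δ σ W ψ lam)
        + 1 / (2 * δ) * (1 - exp (-W)) * sin ψ
        + lam ^ (σ - 1 / 2) * (lam ^ (1 / 2 : ℝ) / bl δ σ lam)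
          * (bl δ σ lam * dampedCos (al δ σ lam) (2 * bl δ σ lam) (ψ - π / 2) (tl δ σ W lam))
          / 2 := by
  have hε := (rpow_pos_of_pos hlam (σ - 1 / 2)).ne'
  have hs := (rpow_pos_of_pos hlam (1 / 2)).ne'
  have hpow : lam ^ σ = lam ^ (σ - 1 / 2) * lam ^ (1 / 2 : ℝ) := by
    rw [← rpow_add hlam, sub_add_cancel]
  rw [uTau'_eq hδ hlam, al, rpow_add hlam, hpow]
  field_simp
  ring

lemma tendsto_rpow_add_half_mul_uTau (hδ : δ ≠ 0) (hσ : σ < 1 / 2) (W ψ : ℝ) :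
    Tendsto (fun lam : ℝ => lam ^ (σ + 1 / 2 : ℝ) * uTau δ σ W ψ lam) atTop
      (𝓝 (1 / (2 * δ) * (1 - exp (-W)) * cos ψ)) := by
  have hr := tendsto_rpow_half_div_bl (δ := δ) hσ
  have hsmall : Tendsto (fun lam => lam ^ (σ - 1 / 2) * (lam ^ (1 / 2 : ℝ) / bl δ σ lam) ^ 2)
      atTop (𝓝 0) := by
    simpa using (tendsto_rpow_atTop_of_neg (by linarith : σ - 1 / 2 < 0)).mul (hr.pow 2)
  have hrem := hsmall.zero_mul_isBoundedUnder_le (isBoundedUnder_bl_mul_dampedCos hδ hσ W ψ)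
  have h := (hr.mul_const (1 / (2 * δ) * (1 - exp (-W)) * cos ψ)).sub (hrem.div_const 2)
  rw [one_mul, zero_div, sub_zero] at h
  refine h.congr' ?_
  filter_upwards [eventually_gt_atTop 0] with lam hlam
  exact (rpow_add_half_mul_uTau_eq hδ hlam W ψ).symm

lemma tendsto_rpow_mul_uTau' (hδ : δ ≠ 0) (hσ : σ < 1 / 2) (W ψ : ℝ) :
    Tendsto (fun lam : ℝ => lam ^ σ * uTau' δ σ W ψ lam) atTop
      (𝓝 (1 / (2 * δ) * (1 - exp (-W)) * sin ψ)) := by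
  have hε := tendsto_rpow_atTop_of_neg (by linarith : σ - 1 / 2 < 0)
  have hsmall : Tendsto (fun lam => lam ^ (σ - 1 / 2) * (lam ^ (1 / 2 : ℝ) / bl δ σ lam))
      atTop (𝓝 0) := by
    simpa using hε.mul (tendsto_rpow_half_div_bl hσ)
  have hrem := hsmall.zero_mul_isBoundedUnder_le
    (isBoundedUnder_bl_mul_dampedCos hδ hσ W (ψ - π / 2))
  have h := (((hε.const_mul (-δ)).mul (tendsto_rpow_add_half_mul_uTau hδ hσ W ψ)).add_const
    (1 / (2 * δ) * (1 - exp (-W)) * sin ψ)).add (hrem.div_const 2)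
  rw [mul_zero, zero_mul, zero_add, zero_div, add_zero] at h
  refine h.congr' ?_
  filter_upwards [eventually_subcritical (δ := δ) hσ] with lam ⟨hlam, hsub⟩
  exact (rpow_mul_uTau'_eq hδ hlam (bl_pos hlam hsub).ne' W ψ).symm

end Asymptotics

theorem subcritical_blowup_limits_general (δ σ W ψ : ℝ) (hδ : 0 < δ)
    (hσ : σ < 1 / 2) :
    Tendsto (fun lam : ℝ => lam ^ (σ + (1 : ℝ) / 2) * uTau δ σ W ψ lam) atTop
      (nhds ((1 / (2 * δ)) * (1 - Real.exp (-W)) * Real.cos ψ)) ∧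
    Tendsto (fun lam : ℝ => lam ^ σ * uTau' δ σ W ψ lam) atTop
      (nhds ((1 / (2 * δ)) * (1 - Real.exp (-W)) * Real.sin ψ)) :=
  ⟨tendsto_rpow_add_half_mul_uTau hδ.ne' hσ W ψ, tendsto_rpow_mul_uTau' hδ.ne' hσ W ψ⟩

/-- in the subcritical regime `0 < σ < 1/2`, with the oscillating forcing
term `sin(b_λ(τ_λ − t) + ψ)` and `τ_λ = W/a_λ`, one has
`λ^{σ+1/2} u_λ(τ_λ) → (1/(2δ))(1 − e^{−W})cos ψ` and
`λ^σ u_λ'(τ_λ) → (1/(2δ))(1 − e^{−W})sin ψ` as `λ → +∞`. -/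
theorem subcritical_blowup_limits (δ σ W ψ : ℝ) (hδ : 0 < δ) (hσ0 : 0 < σ)
    (hσ : σ < 1 / 2) (hW : 0 < W) :
    Tendsto (fun lam : ℝ => lam ^ (σ + (1 : ℝ) / 2) * uTau δ σ W ψ lam) atTop
      (nhds ((1 / (2 * δ)) * (1 - Real.exp (-W)) * Real.cos ψ)) ∧
    Tendsto (fun lam : ℝ => lam ^ σ * uTau' δ σ W ψ lam) atTop
      (nhds ((1 / (2 * δ)) * (1 - Real.exp (-W)) * Real.sin ψ)) :=
  subcritical_blowup_limits_general δ σ W ψ hδ hσ
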